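/- Let d ≥ 1, let E = {E_i}_{i=1}^{d²} be a measure basis for d×d complex matrices with all weights strictly positive, and let U be a d×d unitary matrix. Then the family {U E_i U†} is a measure basis with the same weights and the same Gram matrix as E, and its principal Wigner basis is the unitary conjugate of that of E: PW({U E_i U†})_i = U·PW(E)_i·U† for all i. -/

import Mathlib

open Matrix BigOperators
open scoped ComplexOrder Kronecker

/-- A measure basis: a linearly independent family of `d²` Hermitian `d×d` complex
matrices summing to the identity, with nonnegative traces. -/
def IsMeasureBasis {d : ℕ} (L : Fin (d ^ 2) → Matrix (Fin d) (Fin d) ℂ) : Prop :=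
  (∀ i, (L i).IsHermitian) ∧ LinearIndependent ℝ L ∧ (∑ i, L i) = 1 ∧ ∀ i, 0 ≤ ((L i).trace).re

/-- A Wigner basis: an orthogonal measure basis. -/
def IsWignerBasis {d : ℕ} (L : Fin (d ^ 2) → Matrix (Fin d) (Fin d) ℂ) : Prop :=
  IsMeasureBasis L ∧ ∀ i j, i ≠ j → (L i * L j).trace = 0

/-- The rescaled frame operator `S_L(X) = ∑ⱼ (tr(X Lⱼ)/lⱼ) Lⱼ`. -/
noncomputable def rsFrameOp {n : Type*} [Fintype n] {m : Type*} [Fintype m] [DecidableEq m]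
    (L : n → Matrix m m ℂ) (X : Matrix m m ℂ) : Matrix m m ℂ :=
  ∑ j, (((X * L j).trace) / ((L j).trace)) • L j

/-- A map on matrices that is ℝ-linear, Hermiticity-preserving, self-adjoint with respect to
the Hilbert–Schmidt inner product on Hermitian matrices, and positive. -/
def IsPosSelfAdjMap {m : Type*} [Fintype m]
    (T : Matrix m m ℂ → Matrix m m ℂ) : Prop :=
  IsLinearMap ℝ T ∧ (∀ X, X.IsHermitian → (T X).IsHermitian) ∧
  (∀ X Y, X.IsHermitian → Y.IsHermitian → (T X * Y).trace = (X * T Y).trace) ∧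
  (∀ X, X.IsHermitian → 0 ≤ ((X * T X).trace).re)

/-- `T` is the (unique) positive self-adjoint inverse square root of the rescaled frame
operator of `L`, i.e. `S_L ∘ T ∘ T = id` on Hermitian matrices; `PW(L) i = T (L i)`. -/
def IsInvSqrtOfFrameOp {n : Type*} [Fintype n] {m : Type*} [Fintype m] [DecidableEq m]
    (L : n → Matrix m m ℂ) (T : Matrix m m ℂ → Matrix m m ℂ) : Prop :=
  IsPosSelfAdjMap T ∧ ∀ X : Matrix m m ℂ, X.IsHermitian → rsFrameOp L (T (T X)) = X

/-! Conjugation `X ↦ U X Uᴴ` is a trace-preserving ⋆-automorphism of the matrix algebra, so it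
carries measure bases to measure bases, preserves traces of products, and intertwines the rescaled
frame operators of `E` and `U E Uᴴ`. It therefore transports the inverse square root `T` of `S_E`
to a positive self-adjoint inverse square root of `S_{UEUᴴ}`. That one equals `T'`, because on the
real Hilbert–Schmidt space of Hermitian matrices both `T²` and `T'²` invert `S_{UEUᴴ}`, and a
positive operator has only one positive square root. -/

theorem LinearMap.IsPositive.eq_of_mul_self_eq {𝕜 E : Type*} [RCLike 𝕜] [NormedAddCommGroup E]
    [InnerProductSpace 𝕜 E] [FiniteDimensional 𝕜 E] {A B : E →ₗ[𝕜] E}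
    (hA : A.IsPositive) (hB : B.IsPositive) (h : A * A = B * B) : A = B := by
  open scoped MatrixOrder in
  let b := (stdOrthonormalBasis 𝕜 E).toBasis
  have hA' := (LinearMap.posSemidef_toMatrix_iff (stdOrthonormalBasis 𝕜 E)).mpr hA
  have hB' := (LinearMap.posSemidef_toMatrix_iff (stdOrthonormalBasis 𝕜 E)).mpr hB
  apply (LinearMap.toMatrix b b).injective
  rw [← CFC.mul_self_eq_mul_self_iff _ _ hA'.nonneg hB'.nonneg, ← LinearMap.toMatrix_mul,
    ← LinearMap.toMatrix_mul, h]

theorem LinearMap.eq_of_leftInverse_of_injective {R V X : Type*} [Field R] [AddCommGroup V]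
    [Module R V] [FiniteDimensional R V] {P Q : V →ₗ[R] V} {g ι : V → X}
    (hι : Function.Injective ι) (hP : ∀ x, g (P x) = ι x) (hQ : ∀ x, g (Q x) = ι x) :
    P = Q := by
  have hPinj : Function.Injective P := fun x y hxy => hι <| by rw [← hP, ← hP, hxy]
  ext x
  obtain ⟨y, hy⟩ := LinearMap.injective_iff_surjective.mp hPinj (Q x)
  rw [← hy, hι (by rw [← hP, ← hQ, hy] : ι y = ι x)]

namespace Matrix

variable {m : Type*} [Fintype m]

theorem IsHermitian.trace_mul_self_nonneg {X : Matrix m m ℂ} (hX : X.IsHermitian) :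
    0 ≤ (X * X).trace := by
  simpa only [hX.eq] using (posSemidef_conjTranspose_mul_self X).trace_nonneg

theorem IsHermitian.trace_mul_self_eq_zero_iff {X : Matrix m m ℂ} (hX : X.IsHermitian) :
    (X * X).trace = 0 ↔ X = 0 := by
  nth_rewrite 1 [← hX.eq]
  exact trace_conjTranspose_mul_self_eq_zero_iff

noncomputable instance hilbertSchmidtCore :
    InnerProductSpace.Core ℝ (selfAdjoint.submodule ℝ (Matrix m m ℂ)) where
  inner X Y := ((X * Y : Matrix m m ℂ).trace).re
  conj_inner_symm X Y := by rw [conj_trivial, trace_mul_comm]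
  re_inner_nonneg X := (Complex.nonneg_iff.mp (IsHermitian.trace_mul_self_nonneg X.2)).1
  add_left X Y Z := by simp [add_mul]
  smul_left X Y r := by simp
  definite X hX := Subtype.ext <| (IsHermitian.trace_mul_self_eq_zero_iff X.2).mp <|
    Complex.ext hX (Complex.nonneg_iff.mp (IsHermitian.trace_mul_self_nonneg X.2)).2.symm

noncomputable instance : NormedAddCommGroup (selfAdjoint.submodule ℝ (Matrix m m ℂ)) :=
  hilbertSchmidtCore.toNormedAddCommGroup

noncomputable instance : InnerProductSpace ℝ (selfAdjoint.submodule ℝ (Matrix m m ℂ)) :=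
  InnerProductSpace.ofCore hilbertSchmidtCore.toCore

theorem inner_selfAdjoint_submodule (X Y : selfAdjoint.submodule ℝ (Matrix m m ℂ)) :
    inner ℝ X Y = ((X * Y : Matrix m m ℂ).trace).re :=
  rfl

end Matrix

section PosSelfAdj

variable {m : Type*} [Fintype m] {T : Matrix m m ℂ → Matrix m m ℂ}

def IsPosSelfAdjMap.restrict (hT : IsPosSelfAdjMap T) :
    selfAdjoint.submodule ℝ (Matrix m m ℂ) →ₗ[ℝ] selfAdjoint.submodule ℝ (Matrix m m ℂ) where
  toFun X := ⟨T X, hT.2.1 X X.2⟩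
  map_add' X Y := Subtype.ext (hT.1.map_add X Y)
  map_smul' r X := Subtype.ext (hT.1.map_smul r X)

theorem IsPosSelfAdjMap.isPositive_restrict (hT : IsPosSelfAdjMap T) : hT.restrict.IsPositive :=
  ⟨fun X Y => congrArg Complex.re (hT.2.2.1 X Y X.2 Y.2), fun X => by
    rw [RCLike.re_to_real, real_inner_comm]
    exact hT.2.2.2 X X.2⟩

end PosSelfAdj

theorem IsInvSqrtOfFrameOp.apply_eq {n m : Type*} [Fintype n] [Fintype m] [DecidableEq m]
    {L : n → Matrix m m ℂ} {T T' : Matrix m m ℂ → Matrix m m ℂ}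
    (hT : IsInvSqrtOfFrameOp L T) (hT' : IsInvSqrtOfFrameOp L T') {X : Matrix m m ℂ}
    (hX : X.IsHermitian) : T X = T' X := by
  have hsq : hT.1.restrict * hT.1.restrict = hT'.1.restrict * hT'.1.restrict :=
    LinearMap.eq_of_leftInverse_of_injective (g := fun Y => rsFrameOp L Y) Subtype.val_injective
      (fun Y => hT.2 Y Y.2) (fun Y => hT'.2 Y Y.2)
  have hrestrict := hT.1.isPositive_restrict.eq_of_mul_self_eq hT'.1.isPositive_restrict hsq
  exact congrArg Subtype.val (LinearMap.congr_fun hrestrict ⟨X, hX⟩)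

section Conjugation

variable {m : Type*} [Fintype m] {φ : Matrix m m ℂ ≃⋆ₐ[ℂ] Matrix m m ℂ}

theorem Matrix.IsHermitian.map_starAlgEquiv {X : Matrix m m ℂ} (hX : X.IsHermitian) :
    (φ X).IsHermitian := by
  rw [IsHermitian, ← star_eq_conjTranspose, ← map_star, star_eq_conjTranspose, hX.eq]

theorem trace_map_mul_map (hφ : ∀ X, (φ X).trace = X.trace) (X Y : Matrix m m ℂ) :
    (φ X * φ Y).trace = (X * Y).trace := by
  rw [← map_mul, hφ]

theorem trace_map_mul (hφ : ∀ X, (φ X).trace = X.trace) (X Y : Matrix m m ℂ) :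
    (φ X * Y).trace = (X * φ.symm Y).trace := by
  rw [← trace_map_mul_map hφ X (φ.symm Y), φ.apply_symm_apply]

theorem trace_mul_map (hφ : ∀ X, (φ X).trace = X.trace) (X Y : Matrix m m ℂ) :
    (X * φ Y).trace = (φ.symm X * Y).trace := by
  rw [← trace_map_mul_map hφ (φ.symm X) Y, φ.apply_symm_apply]

theorem rsFrameOp_map [DecidableEq m] (hφ : ∀ X, (φ X).trace = X.trace) {n : Type*} [Fintype n]
    (L : n → Matrix m m ℂ) (X : Matrix m m ℂ) :
    rsFrameOp (fun i => φ (L i)) (φ X) = φ (rsFrameOp L X) := by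
  simp only [rsFrameOp, map_sum, map_smul, trace_map_mul_map hφ, hφ]

theorem IsPosSelfAdjMap.conj [DecidableEq m] (hφ : ∀ X, (φ X).trace = X.trace)
    {T : Matrix m m ℂ → Matrix m m ℂ} (hT : IsPosSelfAdjMap T) :
    IsPosSelfAdjMap (fun X => φ (T (φ.symm X))) := by
  obtain ⟨hlin, hherm, hsymm, hpos⟩ := hT
  let φℝ := φ.toAlgEquiv.toLinearEquiv.restrictScalars ℝ
  refine ⟨(φℝ.toLinearMap ∘ₗ hlin.mk' T ∘ₗ φℝ.symm.toLinearMap).isLinear,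
    fun X hX => (hherm _ hX.map_starAlgEquiv).map_starAlgEquiv, fun X Y hX hY => ?_,
    fun X hX => ?_⟩
  · dsimp only
    rw [trace_map_mul hφ, hsymm _ _ hX.map_starAlgEquiv hY.map_starAlgEquiv, ← trace_mul_map hφ]
  · rw [trace_mul_map hφ]
    exact hpos _ hX.map_starAlgEquiv

theorem IsInvSqrtOfFrameOp.conj [DecidableEq m] (hφ : ∀ X, (φ X).trace = X.trace) {n : Type*}
    [Fintype n] {L : n → Matrix m m ℂ} {T : Matrix m m ℂ → Matrix m m ℂ}
    (hT : IsInvSqrtOfFrameOp L T) :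
    IsInvSqrtOfFrameOp (fun i => φ (L i)) (fun X => φ (T (φ.symm X))) := by
  refine ⟨hT.1.conj hφ, fun X hX => ?_⟩
  simp only [StarAlgEquiv.symm_apply_apply]
  rw [rsFrameOp_map hφ, hT.2 _ hX.map_starAlgEquiv, StarAlgEquiv.apply_symm_apply]

end Conjugation

theorem IsMeasureBasis.map {d : ℕ} {φ : Matrix (Fin d) (Fin d) ℂ ≃⋆ₐ[ℂ] Matrix (Fin d) (Fin d) ℂ}
    (hφ : ∀ X, (φ X).trace = X.trace) {L : Fin (d ^ 2) → Matrix (Fin d) (Fin d) ℂ}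
    (hL : IsMeasureBasis L) : IsMeasureBasis (fun i => φ (L i)) := by
  obtain ⟨hherm, hli, hsum, htr⟩ := hL
  refine ⟨fun i => (hherm i).map_starAlgEquiv, ?_, by rw [← map_sum, hsum, map_one],
    fun i => hφ (L i) ▸ htr i⟩
  exact hli.map' ((φ.toAlgEquiv.toLinearEquiv.restrictScalars ℝ).toLinearMap) (LinearEquiv.ker _)

theorem Matrix.trace_conjStarAlgAut {m : Type*} [Fintype m] [DecidableEq m]
    (U : unitaryGroup m ℂ) (X : Matrix m m ℂ) :
    (Unitary.conjStarAlgAut ℂ _ U X).trace = X.trace := by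
  rw [Unitary.conjStarAlgAut_apply, trace_mul_cycle, Unitary.coe_star_mul_self, one_mul]

theorem principal_wigner_unitary_covariance {d : ℕ}
    (E : Fin (d ^ 2) → Matrix (Fin d) (Fin d) ℂ)
    (hE : IsMeasureBasis E)
    (U : Matrix (Fin d) (Fin d) ℂ) (hU : U ∈ Matrix.unitaryGroup (Fin d) ℂ)
    (T T' : Matrix (Fin d) (Fin d) ℂ → Matrix (Fin d) (Fin d) ℂ)
    (hT : IsInvSqrtOfFrameOp E T)
    (hT' : IsInvSqrtOfFrameOp (fun i => U * E i * Uᴴ) T') :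
    IsMeasureBasis (fun i => U * E i * Uᴴ) ∧
    (∀ i, (U * E i * Uᴴ).trace = (E i).trace) ∧
    (∀ i j, ((U * E i * Uᴴ) * (U * E j * Uᴴ)).trace = (E i * E j).trace) ∧
    (∀ i, T' (U * E i * Uᴴ) = U * T (E i) * Uᴴ) := by
  set φ := Unitary.conjStarAlgAut ℂ (Matrix (Fin d) (Fin d) ℂ) ⟨U, hU⟩
  have hφ : ∀ X, (φ X).trace = X.trace := trace_conjStarAlgAut _
  refine ⟨hE.map hφ, fun i => hφ (E i), fun i j => trace_map_mul_map hφ (E i) (E j), fun i => ?_⟩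
  calc T' (φ (E i)) = φ (T (φ.symm (φ (E i)))) :=
        ((hT.conj hφ).apply_eq hT' (hE.1 i).map_starAlgEquiv).symm
    _ = φ (T (E i)) := by rw [φ.symm_apply_apply]
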